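/- arXiv:2104.01585 — 2 statements merged into one kernel-verified Lean document; each statement's English description precedes it below -/
import Mathlib

section
/- Let κ > 0 and let u : [0,1] × [0,∞) → ℝ be a classical solution (C² in x, C¹ in t, continuous up to the boundary) of u_t = u_xx − κ²u on (0,1) × (0,∞), satisfying for every t ≥ 0 the non-local boundary conditions u_x(0,t) = −κ²∫₀¹ (1−s)·u(s,t) ds and u_x(1,t) = κ²∫₀¹ s·u(s,t) ds. If u(x,0) ≥ 0 for all x ∈ [0,1], then u(x,t) ≥ 0 for all x ∈ [0,1] and all t ≥ 0. -/
/-- A classical solution of `w_t = w_xx - c·w` on `(0,1) × (0,∞)`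
(`C²` in `x`, `C¹` in `t`, continuous up to the boundary), satisfying the
non-local boundary conditions
`w_x(0,t) = -κ² ∫₀¹ (1-s) w(s,t) ds`, `w_x(1,t) = κ² ∫₀¹ s w(s,t) ds`. -/
def IsClassicalSol (κ c : ℝ) (w : ℝ → ℝ → ℝ) : Prop :=
  (∀ t ∈ Set.Ici (0:ℝ), ContDiffOn ℝ 2 (fun x => w x t) (Set.Icc 0 1)) ∧
  (∀ x ∈ Set.Icc (0:ℝ) 1, ContDiffOn ℝ 1 (fun t => w x t) (Set.Ici 0)) ∧
  ContinuousOn (fun p : ℝ × ℝ => w p.1 p.2) (Set.Icc 0 1 ×ˢ Set.Ici 0) ∧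
  (∀ x ∈ Set.Ioo (0:ℝ) 1, ∀ t > (0:ℝ),
    deriv (fun τ => w x τ) t = deriv (deriv (fun y => w y t)) x - c * w x t) ∧
  (∀ t ∈ Set.Ici (0:ℝ),
    derivWithin (fun x => w x t) (Set.Icc 0 1) 0
      = -κ ^ 2 * ∫ s in (0:ℝ)..1, (1 - s) * w s t) ∧
  (∀ t ∈ Set.Ici (0:ℝ),
    derivWithin (fun x => w x t) (Set.Icc 0 1) 1
      = κ ^ 2 * ∫ s in (0:ℝ)..1, s * w s t)

/-!
`g x = cosh (κ (x - 1/2))` is a positive stationary solution satisfying both non-local boundary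
conditions. For `ε > 0` the function `u / g + ε t` attains its minimum over `[0,1] × [0,T]`;
suppose this happens at a time `t₀ > 0`, and let `c` be the minimum of `u(·,t₀) / g`. Then
`q = u(·,t₀) - c g ≥ 0` vanishes at the minimum point and, by linearity, satisfies the boundary
conditions. At `x = 0` this gives `0 ≤ q'(0) = -κ² ∫ (1 - s) q`, so `q` also vanishes inside
`(0,1)`; similarly at `x = 1`. At an interior minimum `q'' ≥ 0` gives `u_xx ≥ κ² u`, while
minimality in time gives `u_t ≤ -ε g < 0`, contradicting the equation. So the minimum is taken
at `t = 0`, where it is nonnegative, and `ε → 0` gives `u ≥ 0`.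
-/

open Set Filter Topology Real

theorem IsLocalMinOn.hasDerivWithinAt_mul_sub_nonneg {f : ℝ → ℝ} {s : Set ℝ} {a b f' : ℝ}
    (h : IsLocalMinOn f s a) (hf : HasDerivWithinAt f f' s a) (hab : segment ℝ a b ⊆ s) :
    0 ≤ f' * (b - a) := by
  simpa [mul_comm] using
    h.hasFDerivWithinAt_nonneg hf.hasFDerivWithinAt (sub_mem_posTangentConeAt_of_segment_subset hab)

theorem IsLocalMin.deriv_deriv_nonneg {f : ℝ → ℝ} {a : ℝ} (h : IsLocalMin f a)
    (hc : ContinuousAt f a) : 0 ≤ deriv (deriv f) a := by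
  by_contra! hneg
  have hconst : f =ᶠ[𝓝 a] fun _ => f a :=
    (h.and (isLocalMax_of_deriv_deriv_neg hneg h.deriv_eq_zero hc)).mono
      fun x hx => le_antisymm hx.2 hx.1
  have hderiv : deriv f =ᶠ[𝓝 a] fun _ => 0 :=
    hconst.eventuallyEq_nhds.mono fun x hx => by simpa using hx.deriv_eq
  simp [hderiv.deriv_eq] at hneg

theorem exists_mem_Ioo_eq_zero_of_integral_mul_nonpos {w q : ℝ → ℝ} {a b : ℝ} (hab : a < b)
    (hwq : IntervalIntegrable (fun x => w x * q x) MeasureTheory.volume a b)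
    (hw : ∀ x ∈ Ioo a b, 0 < w x) (hq : ∀ x ∈ Ioo a b, 0 ≤ q x)
    (hnonpos : ∫ x in a..b, w x * q x ≤ 0) : ∃ x ∈ Ioo a b, q x = 0 := by
  by_contra! hne
  have hpos : ∀ x ∈ Ioo a b, 0 < w x * q x := fun x hx =>
    mul_pos (hw x hx) ((hq x hx).lt_of_ne (hne x hx).symm)
  exact (intervalIntegral.intervalIntegral_pos_of_pos_on hwq hpos hab).not_ge hnonpos

theorem hasDerivWithinAt_sub_const_mul_of_integral {v g w : ℝ → ℝ} {s : Set ℝ}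
    {a b x₀ k c : ℝ} (hv : HasDerivWithinAt v (k * ∫ x in a..b, w x * v x) s x₀)
    (hg : HasDerivAt g (k * ∫ x in a..b, w x * g x) x₀)
    (hwv : IntervalIntegrable (fun x => w x * v x) MeasureTheory.volume a b)
    (hwg : IntervalIntegrable (fun x => w x * g x) MeasureTheory.volume a b) :
    HasDerivWithinAt (fun x => v x - c * g x) (k * ∫ x in a..b, w x * (v x - c * g x)) s x₀ := by
  have hsplit : ∫ x in a..b, w x * (v x - c * g x)
      = (∫ x in a..b, w x * v x) - c * ∫ x in a..b, w x * g x := by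
    rw [← intervalIntegral.integral_const_mul, ← intervalIntegral.integral_sub hwv (hwg.const_mul c)]
    congr 1; ext x; ring
  rw [hsplit]
  exact (hv.sub (hg.hasDerivWithinAt.const_mul c)).congr_deriv (by ring)

namespace LinearizedPNP

theorem exists_mem_Ioo_eq_zero_of_hasDerivWithinAt_zero {q : ℝ → ℝ} {k : ℝ} (hk : 0 < k)
    (hq : ContinuousOn q (Icc 0 1)) (hnonneg : ∀ x ∈ Icc (0:ℝ) 1, 0 ≤ q x) (h0 : q 0 = 0)
    (hd : HasDerivWithinAt q (-k * ∫ x in (0:ℝ)..1, (1 - x) * q x) (Icc 0 1) 0) :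
    ∃ x ∈ Ioo (0:ℝ) 1, q x = 0 := by
  have hmin : IsMinOn q (Icc 0 1) 0 := isMinOn_iff.mpr fun x hx => by rw [h0]; exact hnonneg x hx
  have hslope := hmin.localize.hasDerivWithinAt_mul_sub_nonneg hd
    ((convex_Icc 0 1).segment_subset (left_mem_Icc.mpr zero_le_one) (right_mem_Icc.mpr zero_le_one))
  refine exists_mem_Ioo_eq_zero_of_integral_mul_nonpos zero_lt_one ?_
    (fun x hx => sub_pos.mpr hx.2) (fun x hx => hnonneg x (Ioo_subset_Icc_self hx)) (by nlinarith)
  exact ((continuousOn_const.sub continuousOn_id).mul hq).intervalIntegrable_of_Icc zero_le_one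

theorem exists_mem_Ioo_eq_zero_of_hasDerivWithinAt_one {q : ℝ → ℝ} {k : ℝ} (hk : 0 < k)
    (hq : ContinuousOn q (Icc 0 1)) (hnonneg : ∀ x ∈ Icc (0:ℝ) 1, 0 ≤ q x) (h1 : q 1 = 0)
    (hd : HasDerivWithinAt q (k * ∫ x in (0:ℝ)..1, x * q x) (Icc 0 1) 1) :
    ∃ x ∈ Ioo (0:ℝ) 1, q x = 0 := by
  have hmin : IsMinOn q (Icc 0 1) 1 := isMinOn_iff.mpr fun x hx => by rw [h1]; exact hnonneg x hx
  have hslope := hmin.localize.hasDerivWithinAt_mul_sub_nonneg hd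
    ((convex_Icc 0 1).segment_subset (right_mem_Icc.mpr zero_le_one) (left_mem_Icc.mpr zero_le_one))
  refine exists_mem_Ioo_eq_zero_of_integral_mul_nonpos zero_lt_one ?_
    (fun x hx => hx.1) (fun x hx => hnonneg x (Ioo_subset_Icc_self hx)) (by nlinarith)
  exact (continuousOn_id.mul hq).intervalIntegrable_of_Icc zero_le_one

noncomputable def stationaryProfile (κ x : ℝ) : ℝ := cosh (κ * (x - 1 / 2))

section Profile

variable (κ : ℝ)

theorem stationaryProfile_pos (x : ℝ) : 0 < stationaryProfile κ x := cosh_pos _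

@[fun_prop]
theorem continuous_stationaryProfile : Continuous (stationaryProfile κ) := by
  unfold stationaryProfile; fun_prop

theorem contDiff_stationaryProfile : ContDiff ℝ 2 (stationaryProfile κ) := by
  unfold stationaryProfile; fun_prop

theorem stationaryProfile_one : stationaryProfile κ 1 = stationaryProfile κ 0 := by
  rw [stationaryProfile, stationaryProfile, ← cosh_neg]; ring_nf

theorem hasDerivAt_stationaryProfile (x : ℝ) :
    HasDerivAt (stationaryProfile κ) (κ * sinh (κ * (x - 1 / 2))) x :=
  ((((hasDerivAt_id' x).sub_const (1 / 2)).const_mul κ).cosh).congr_deriv (by ring)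

theorem hasDerivAt_stationaryProfile_deriv (x : ℝ) :
    HasDerivAt (fun y => κ * sinh (κ * (y - 1 / 2))) (κ ^ 2 * stationaryProfile κ x) x :=
  (((((hasDerivAt_id' x).sub_const (1 / 2)).const_mul κ).sinh).const_mul κ).congr_deriv
    (by rw [stationaryProfile]; ring)

theorem deriv_deriv_stationaryProfile (x : ℝ) :
    deriv (deriv (stationaryProfile κ)) x = κ ^ 2 * stationaryProfile κ x := by
  rw [funext fun y => (hasDerivAt_stationaryProfile κ y).deriv,
    (hasDerivAt_stationaryProfile_deriv κ x).deriv]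

/-- `(1 - s) g' + g` and `s g' - g` are antiderivatives of `κ² (1 - s) g` and `κ² s g`
because `g'' = κ² g`, and `g 0 = g 1`. -/
theorem hasDerivAt_stationaryProfile_zero :
    HasDerivAt (stationaryProfile κ)
      (-κ ^ 2 * ∫ s in (0:ℝ)..1, (1 - s) * stationaryProfile κ s) 0 := by
  have hF : ∀ s ∈ uIcc (0:ℝ) 1, HasDerivAt
      (fun y => (1 - y) * (κ * sinh (κ * (y - 1 / 2))) + stationaryProfile κ y)
      (κ ^ 2 * ((1 - s) * stationaryProfile κ s)) s := fun s _ =>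
    ((((hasDerivAt_id' s).const_sub 1).mul (hasDerivAt_stationaryProfile_deriv κ s)).add
      (hasDerivAt_stationaryProfile κ s)).congr_deriv (by ring)
  have hcont : Continuous fun s => κ ^ 2 * ((1 - s) * stationaryProfile κ s) := by fun_prop
  have hFTC := intervalIntegral.integral_eq_sub_of_hasDerivAt hF (hcont.intervalIntegrable 0 1)
  rw [intervalIntegral.integral_const_mul, stationaryProfile_one] at hFTC
  convert hasDerivAt_stationaryProfile κ 0 using 1
  rw [neg_mul, hFTC]; ring

theorem hasDerivAt_stationaryProfile_one :
    HasDerivAt (stationaryProfile κ) (κ ^ 2 * ∫ s in (0:ℝ)..1, s * stationaryProfile κ s) 1 := by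
  have hF : ∀ s ∈ uIcc (0:ℝ) 1, HasDerivAt
      (fun y => y * (κ * sinh (κ * (y - 1 / 2))) - stationaryProfile κ y)
      (κ ^ 2 * (s * stationaryProfile κ s)) s := fun s _ =>
    (((hasDerivAt_id' s).mul (hasDerivAt_stationaryProfile_deriv κ s)).sub
      (hasDerivAt_stationaryProfile κ s)).congr_deriv (by ring)
  have hcont : Continuous fun s => κ ^ 2 * (s * stationaryProfile κ s) := by fun_prop
  have hFTC := intervalIntegral.integral_eq_sub_of_hasDerivAt hF (hcont.intervalIntegrable 0 1)
  rw [intervalIntegral.integral_const_mul, stationaryProfile_one] at hFTC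
  convert hasDerivAt_stationaryProfile κ 1 using 1
  rw [hFTC]; ring

end Profile

theorem le_deriv_deriv_of_isLocalMin_div_stationaryProfile {κ x : ℝ} {v : ℝ → ℝ}
    (hv : ContDiffAt ℝ 2 v x) (hmin : IsLocalMin (fun y => v y / stationaryProfile κ y) x) :
    κ ^ 2 * v x ≤ deriv (deriv v) x := by
  set c := v x / stationaryProfile κ x
  have hcx : c * stationaryProfile κ x = v x := div_mul_cancel₀ _ (stationaryProfile_pos κ x).ne'
  have hq : IsLocalMin (fun y => v y - c * stationaryProfile κ y) x := by
    filter_upwards [hmin] with y hy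
    rw [le_div_iff₀ (stationaryProfile_pos κ y)] at hy
    linarith
  have hg : ContDiffAt ℝ 2 (stationaryProfile κ) x := (contDiff_stationaryProfile κ).contDiffAt
  have hsecond := hq.deriv_deriv_nonneg (hv.continuousAt.sub (hg.continuousAt.const_mul c))
  have hderiv2 : ∀ f : ℝ → ℝ, deriv (deriv f) = iteratedDeriv 2 f := fun f => by
    rw [iteratedDeriv_succ, iteratedDeriv_one]
  rw [hderiv2, iteratedDeriv_fun_sub hv (contDiffAt_const.mul hg), iteratedDeriv_const_mul c hg,
    ← hderiv2, ← hderiv2, deriv_deriv_stationaryProfile] at hsecond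
  rw [← hcx]
  linarith

theorem exists_mem_Ioo_div_stationaryProfile_eq_of_isMinOn {κ : ℝ} (hκ : κ ≠ 0) {v : ℝ → ℝ}
    (hv : ContinuousOn v (Icc 0 1))
    (h0 : HasDerivWithinAt v (-κ ^ 2 * ∫ s in (0:ℝ)..1, (1 - s) * v s) (Icc 0 1) 0)
    (h1 : HasDerivWithinAt v (κ ^ 2 * ∫ s in (0:ℝ)..1, s * v s) (Icc 0 1) 1)
    {x₀ : ℝ} (hx₀ : x₀ ∈ Icc (0:ℝ) 1)
    (hmin : IsMinOn (fun x => v x / stationaryProfile κ x) (Icc 0 1) x₀) :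
    ∃ x₁ ∈ Ioo (0:ℝ) 1, v x₁ / stationaryProfile κ x₁ = v x₀ / stationaryProfile κ x₀ := by
  set c := v x₀ / stationaryProfile κ x₀
  set q := fun x => v x - c * stationaryProfile κ x
  have hq_nonneg : ∀ x ∈ Icc (0:ℝ) 1, 0 ≤ q x := fun x hx => by
    have hcx := isMinOn_iff.mp hmin x hx
    rw [le_div_iff₀ (stationaryProfile_pos κ x)] at hcx
    exact sub_nonneg.mpr hcx
  have hq_x₀ : q x₀ = 0 := sub_eq_zero.mpr (div_mul_cancel₀ _ (stationaryProfile_pos κ x₀).ne').symm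
  have hq_cont : ContinuousOn q (Icc 0 1) := hv.sub (by fun_prop)
  suffices ∃ x₁ ∈ Ioo (0:ℝ) 1, q x₁ = 0 by
    obtain ⟨x₁, hx₁, hqx₁⟩ := this
    exact ⟨x₁, hx₁, (div_eq_iff (stationaryProfile_pos κ x₁).ne').mpr (sub_eq_zero.mp hqx₁)⟩
  have hκ2 : 0 < κ ^ 2 := by positivity
  have hintegrable : ∀ w : ℝ → ℝ, Continuous w →
      IntervalIntegrable (fun s => w s * v s) MeasureTheory.volume 0 1 ∧
      IntervalIntegrable (fun s => w s * stationaryProfile κ s) MeasureTheory.volume 0 1 :=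
    fun w hw => ⟨(hw.continuousOn.mul hv).intervalIntegrable_of_Icc zero_le_one,
      (hw.mul (continuous_stationaryProfile κ)).intervalIntegrable 0 1⟩
  rcases hx₀.1.eq_or_lt with rfl | hpos
  · have hint₀ := hintegrable (fun s => 1 - s) (by fun_prop)
    exact exists_mem_Ioo_eq_zero_of_hasDerivWithinAt_zero hκ2 hq_cont hq_nonneg hq_x₀
      (hasDerivWithinAt_sub_const_mul_of_integral h0 (hasDerivAt_stationaryProfile_zero κ)
        hint₀.1 hint₀.2)
  rcases hx₀.2.eq_or_lt with rfl | hlt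
  · have hint₁ := hintegrable id continuous_id
    exact exists_mem_Ioo_eq_zero_of_hasDerivWithinAt_one hκ2 hq_cont hq_nonneg hq_x₀
      (hasDerivWithinAt_sub_const_mul_of_integral h1 (hasDerivAt_stationaryProfile_one κ)
        hint₁.1 hint₁.2)
  · exact ⟨x₀, ⟨hpos, hlt⟩, hq_x₀⟩

noncomputable def perturbedRatio (κ ε : ℝ) (u : ℝ → ℝ → ℝ) (p : ℝ × ℝ) : ℝ :=
  u p.1 p.2 / stationaryProfile κ p.1 + ε * p.2

theorem continuousOn_perturbedRatio {κ ε T : ℝ} {u : ℝ → ℝ → ℝ}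
    (hu : ContinuousOn (fun p : ℝ × ℝ => u p.1 p.2) (Icc 0 1 ×ˢ Ici 0)) :
    ContinuousOn (perturbedRatio κ ε u) (Icc 0 1 ×ˢ Icc 0 T) :=
  ((hu.mono (prod_mono subset_rfl Icc_subset_Ici_self)).div (by fun_prop)
    fun p _ => (stationaryProfile_pos κ p.1).ne').add (by fun_prop)

end LinearizedPNP

namespace IsClassicalSol

open LinearizedPNP

variable {κ c : ℝ} {u : ℝ → ℝ → ℝ}

theorem continuousOn_slice (hu : IsClassicalSol κ c u) {t : ℝ} (ht : 0 ≤ t) :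
    ContinuousOn (fun x => u x t) (Icc 0 1) :=
  (hu.1 t ht).continuousOn

theorem contDiffAt_slice (hu : IsClassicalSol κ c u) {x t : ℝ} (hx : x ∈ Ioo (0:ℝ) 1)
    (ht : 0 ≤ t) : ContDiffAt ℝ 2 (fun y => u y t) x :=
  (hu.1 t ht).contDiffAt (Icc_mem_nhds hx.1 hx.2)

theorem hasDerivWithinAt_zero (hu : IsClassicalSol κ c u) {t : ℝ} (ht : 0 ≤ t) :
    HasDerivWithinAt (fun x => u x t) (-κ ^ 2 * ∫ s in (0:ℝ)..1, (1 - s) * u s t) (Icc 0 1) 0 :=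
  hu.2.2.2.2.1 t ht ▸
    ((hu.1 t ht).differentiableOn two_ne_zero 0 (left_mem_Icc.mpr zero_le_one)).hasDerivWithinAt

theorem hasDerivWithinAt_one (hu : IsClassicalSol κ c u) {t : ℝ} (ht : 0 ≤ t) :
    HasDerivWithinAt (fun x => u x t) (κ ^ 2 * ∫ s in (0:ℝ)..1, s * u s t) (Icc 0 1) 1 :=
  hu.2.2.2.2.2 t ht ▸
    ((hu.1 t ht).differentiableOn two_ne_zero 1 (right_mem_Icc.mpr zero_le_one)).hasDerivWithinAt

theorem hasDerivAt_time (hu : IsClassicalSol κ c u) {x t : ℝ} (hx : x ∈ Ioo (0:ℝ) 1)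
    (ht : 0 < t) : HasDerivAt (fun τ => u x τ) (deriv (deriv fun y => u y t) x - c * u x t) t :=
  hu.2.2.2.1 x hx t ht ▸ (((hu.2.1 x (Ioo_subset_Icc_self hx)).contDiffAt
    (Ici_mem_nhds ht)).differentiableAt one_ne_zero).hasDerivAt

theorem not_isMinOn_perturbedRatio_of_mem_Ioo (hu : IsClassicalSol κ (κ ^ 2) u) {ε T x t : ℝ}
    (hε : 0 < ε) (hx : x ∈ Ioo (0:ℝ) 1) (ht : t ∈ Ioc 0 T) :
    ¬IsMinOn (perturbedRatio κ ε u) (Icc 0 1 ×ˢ Icc 0 T) (x, t) := by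
  intro hmin
  have hspace : κ ^ 2 * u x t ≤ deriv (deriv fun y => u y t) x := by
    refine le_deriv_deriv_of_isLocalMin_div_stationaryProfile (hu.contDiffAt_slice hx ht.1.le) ?_
    filter_upwards [Icc_mem_nhds hx.1 hx.2] with y hy
    simpa [perturbedRatio] using isMinOn_iff.mp hmin (y, t) ⟨hy, ht.1.le, ht.2⟩
  have htime : IsMinOn (fun τ => u x τ / stationaryProfile κ x + ε * τ) (Icc 0 T) t :=
    isMinOn_iff.mpr fun τ hτ => isMinOn_iff.mp hmin (x, τ) ⟨Ioo_subset_Icc_self hx, hτ⟩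
  have hslope := htime.localize.hasDerivWithinAt_mul_sub_nonneg
    (((hu.hasDerivAt_time hx ht.1).div_const _).add ((hasDerivAt_id' t).const_mul ε)).hasDerivWithinAt
    ((convex_Icc 0 T).segment_subset ⟨ht.1.le, ht.2⟩ ⟨le_rfl, ht.1.le.trans ht.2⟩)
  have hdiffusion : 0 ≤ (deriv (deriv fun y => u y t) x - κ ^ 2 * u x t) / stationaryProfile κ x :=
    div_nonneg (sub_nonneg.mpr hspace) (stationaryProfile_pos κ x).le
  nlinarith [ht.1]

theorem not_isMinOn_perturbedRatio (hu : IsClassicalSol κ (κ ^ 2) u) (hκ : κ ≠ 0) {ε T x t : ℝ}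
    (hε : 0 < ε) (hx : x ∈ Icc (0:ℝ) 1) (ht : t ∈ Ioc 0 T) :
    ¬IsMinOn (perturbedRatio κ ε u) (Icc 0 1 ×ˢ Icc 0 T) (x, t) := by
  intro hmin
  have hslice : IsMinOn (fun y => u y t / stationaryProfile κ y) (Icc 0 1) x :=
    isMinOn_iff.mpr fun y hy => by
      simpa [perturbedRatio] using isMinOn_iff.mp hmin (y, t) ⟨hy, ht.1.le, ht.2⟩
  obtain ⟨x₁, hx₁, heq⟩ := exists_mem_Ioo_div_stationaryProfile_eq_of_isMinOn hκ
    (hu.continuousOn_slice ht.1.le) (hu.hasDerivWithinAt_zero ht.1.le)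
    (hu.hasDerivWithinAt_one ht.1.le) hx hslice
  refine hu.not_isMinOn_perturbedRatio_of_mem_Ioo hε hx₁ ht (isMinOn_iff.mpr fun p hp => ?_)
  simpa only [perturbedRatio, heq] using isMinOn_iff.mp hmin p hp

end IsClassicalSol

open LinearizedPNP

/-- **Preservation of positivity.** For a classical solution of the
linearized PNP equation `u_t = u_xx - κ²u` under the non-local boundary
conditions, nonnegativity of the initial data is preserved in time. -/
theorem linearized_PNP_positivity
    (κ : ℝ) (hκ : 0 < κ) (u : ℝ → ℝ → ℝ)
    (hu : IsClassicalSol κ (κ ^ 2) u)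
    (hpos : ∀ x ∈ Set.Icc (0:ℝ) 1, 0 ≤ u x 0) :
    ∀ x ∈ Set.Icc (0:ℝ) 1, ∀ t ≥ (0:ℝ), 0 ≤ u x t := by
  intro x hx t ht
  have hperturbed : ∀ ε > 0, 0 ≤ perturbedRatio κ ε u (x, t) := by
    intro ε hε
    obtain ⟨⟨x₀, t₀⟩, ⟨hx₀, ht₀⟩, hmin⟩ := (isCompact_Icc.prod isCompact_Icc).exists_isMinOn
      (f := perturbedRatio κ ε u) ⟨(x, t), hx, ht, le_rfl⟩ (continuousOn_perturbedRatio hu.2.2.1)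
    refine (isMinOn_iff.mp hmin (x, t) ⟨hx, ht, le_rfl⟩).trans' ?_
    rcases ht₀.1.eq_or_lt with rfl | ht₀pos
    · simpa [perturbedRatio] using div_nonneg (hpos x₀ hx₀) (stationaryProfile_pos κ x₀).le
    · exact absurd hmin (hu.not_isMinOn_perturbedRatio hκ.ne' hε hx₀ ⟨ht₀pos, ht₀.2⟩)
  have hcont : Continuous fun ε : ℝ => u x t / stationaryProfile κ x + ε * t := by fun_prop
  have hlimit : Tendsto (fun ε => perturbedRatio κ ε u (x, t)) (𝓝[>] 0)
      (𝓝 (u x t / stationaryProfile κ x)) :=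
    (hcont.tendsto' 0 _ (by simp)).mono_left nhdsWithin_le_nhds
  have hratio : 0 ≤ u x t / stationaryProfile κ x :=
    ge_of_tendsto hlimit (eventually_nhdsWithin_of_forall hperturbed)
  simpa using (le_div_iff₀ (stationaryProfile_pos κ x)).mp hratio
end

section
/- Let κ > 0. Then the limit as λ → 0⁺ of (2·tan(√λ/2) − √λ·(λ + κ²)/κ²)/λ^{3/2} exists and equals 1/12 − 1/κ². In particular, λ = 0 is a limiting root of the transcendental eigenvalue equation 2 tan(√λ/2) = √λ(λ+κ²)/κ² (in the sense that the left-hand minus right-hand side vanishes to order higher than λ^{3/2} as λ → 0⁺) if and only if κ² = 12. -/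
/-!
Substituting `x = √λ`, the quotient becomes `(2 tan(x/2) - x - x³/κ²) / x³`, so everything
reduces to `(tan y - y) / y³ → 1/3` as `y → 0`. That limit follows from one application of
L'Hôpital's rule, because `tan' - 1 = tan²` and `tan y / y → tan' 0 = 1`.
-/

open Filter Topology Real

theorem Real.tendsto_tan_div_self : Tendsto (fun y => tan y / y) (𝓝[≠] 0) (𝓝 1) := by
  simpa [div_eq_inv_mul] using (hasDerivAt_tan (x := 0) (by simp)).tendsto_slope_zero

theorem Real.tendsto_tan_sub_self_div_pow_three :
    Tendsto (fun y => (tan y - y) / y ^ 3) (𝓝[≠] 0) (𝓝 (1 / 3)) := by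
  have hcos : ∀ᶠ y in 𝓝[≠] (0 : ℝ), cos y ≠ 0 := eventually_nhdsWithin_of_eventually_nhds <|
    continuous_cos.continuousAt.eventually_ne (by simp)
  refine HasDerivAt.lhopital_zero_nhdsNE (f' := fun y => tan y ^ 2) (g' := fun y => 3 * y ^ 2)
    ?_ (.of_forall fun y => by simpa using hasDerivAt_pow 3 y) ?_ ?_ ?_ ?_
  · filter_upwards [hcos] with y hy
    refine ((hasDerivAt_tan hy).sub (hasDerivAt_id y)).congr_deriv ?_
    rw [one_div, ← inv_one_add_tan_sq hy, inv_inv]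
    ring
  · filter_upwards [self_mem_nhdsWithin] with y hy
    exact mul_ne_zero three_ne_zero (pow_ne_zero 2 hy)
  · have htan := (hasDerivAt_tan (x := 0) (by simp)).fun_sub (hasDerivAt_id' 0)
    exact tendsto_nhdsWithin_of_tendsto_nhds <| by simpa using htan.continuousAt.tendsto
  · exact tendsto_nhdsWithin_of_tendsto_nhds <| by simpa using (continuous_pow 3).tendsto (0 : ℝ)
  · have h := (tendsto_tan_div_self.pow 2).div_const 3
    rw [one_pow] at h
    refine h.congr' ?_
    filter_upwards [self_mem_nhdsWithin] with y hy
    field_simp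

theorem tendsto_two_mul_tan_half_sub_div_pow_three {c : ℝ} (hc : c ≠ 0) :
    Tendsto (fun x => (2 * tan (x / 2) - x * (x ^ 2 + c) / c) / x ^ 3) (𝓝[≠] 0)
      (𝓝 (1 / 12 - 1 / c)) := by
  have hhalf : Tendsto (fun x : ℝ => x / 2) (𝓝[≠] 0) (𝓝[≠] 0) :=
    tendsto_nhdsWithin_iff.2
      ⟨tendsto_nhdsWithin_of_tendsto_nhds <| by
          simpa using (continuous_id.div_const 2).tendsto (0 : ℝ),
        eventually_mem_nhdsWithin.mono fun x hx => div_ne_zero hx two_ne_zero⟩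
  have h := ((tendsto_tan_sub_self_div_pow_three.comp hhalf).div_const 4).sub_const (1 / c)
  rw [show (1 / 3 : ℝ) / 4 = 1 / 12 by norm_num] at h
  refine h.congr' ?_
  filter_upwards [self_mem_nhdsWithin] with x (hx : x ≠ 0)
  simp only [Function.comp_apply]
  field_simp
  ring

theorem Real.tendsto_sqrt_nhdsGT_zero : Tendsto sqrt (𝓝[>] 0) (𝓝[>] 0) :=
  tendsto_nhdsWithin_iff.2
    ⟨tendsto_nhdsWithin_of_tendsto_nhds <| by simpa using continuous_sqrt.tendsto 0,
      eventually_mem_nhdsWithin.mono fun _ hl => sqrt_pos.2 hl⟩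

/-- **The eigenvalue equation near `λ = 0`.**
`(2 tan(√λ/2) - √λ(λ+κ²)/κ²)/λ^{3/2} → 1/12 - 1/κ²` as `λ → 0⁺`; in
particular `λ = 0` is a limiting root of the transcendental eigenvalue
equation `2 tan(√λ/2) = √λ(λ+κ²)/κ²` (the difference of the two sides
vanishing to order higher than `λ^{3/2}`) iff `κ² = 12`. -/
theorem eigenvalue_equation_limit_at_zero (κ : ℝ) (hκ : 0 < κ) :
    Tendsto (fun l : ℝ =>
        (2 * Real.tan (Real.sqrt l / 2)
          - Real.sqrt l * (l + κ ^ 2) / κ ^ 2) / Real.sqrt l ^ 3)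
      (𝓝[>] (0:ℝ)) (𝓝 (1/12 - 1/κ ^ 2)) ∧
    ((1/12 - 1/κ ^ 2 : ℝ) = 0 ↔ κ ^ 2 = 12) := by
  refine ⟨?_, ?_⟩
  · have h := (tendsto_two_mul_tan_half_sub_div_pow_three (pow_ne_zero 2 hκ.ne')).comp
      (tendsto_sqrt_nhdsGT_zero.mono_right (nhdsWithin_mono _ fun _ hx => ne_of_gt hx))
    refine h.congr' ?_
    filter_upwards [self_mem_nhdsWithin] with l hl
    rw [Function.comp_apply, sq_sqrt (le_of_lt hl)]
  · rw [sub_eq_zero, one_div, one_div, inv_inj, eq_comm]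
end
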